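/- Let G be a matching covered finite simple graph and let ∂(S) be a nontrivial tight cut of G. If G contains no odd conformal bicycle, then the graph obtained from G by contracting S to a single vertex also contains no odd conformal bicycle. -/

import Mathlib

open SimpleGraph

variable {V : Type*}

/-- A conformal bicycle: two vertex-disjoint cycles whose complement
(in the vertex set) induces a subgraph having a perfect matching. -/
def IsConformalBicycle (G : SimpleGraph V) {a b : V} (c₁ : G.Walk a a) (c₂ : G.Walk b b) : Prop :=
  c₁.IsCycle ∧ c₂.IsCycle ∧ (∀ x ∈ c₁.support, x ∉ c₂.support) ∧
    ∃ M : G.Subgraph, M.IsMatching ∧ M.verts = {v | v ∉ c₁.support ∧ v ∉ c₂.support}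

def HasConformalBicycle (G : SimpleGraph V) : Prop :=
  ∃ (a b : V) (c₁ : G.Walk a a) (c₂ : G.Walk b b), IsConformalBicycle G c₁ c₂

def HasOddConformalBicycle (G : SimpleGraph V) : Prop :=
  ∃ (a b : V) (c₁ : G.Walk a a) (c₂ : G.Walk b b),
    IsConformalBicycle G c₁ c₂ ∧ Odd c₁.length ∧ Odd c₂.length

def HasEvenConformalBicycle (G : SimpleGraph V) : Prop :=
  ∃ (a b : V) (c₁ : G.Walk a a) (c₂ : G.Walk b b),
    IsConformalBicycle G c₁ c₂ ∧ Even c₁.length ∧ Even c₂.length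

/-- A matching covered graph: connected, at least two vertices,
and every edge lies in some perfect matching. -/
def MatchingCovered (G : SimpleGraph V) [Fintype V] : Prop :=
  G.Connected ∧ 2 ≤ Fintype.card V ∧
    ∀ e ∈ G.edgeSet, ∃ M : G.Subgraph, M.IsPerfectMatching ∧ e ∈ M.edgeSet

/-- The cut ∂(S): edges of `G` with exactly one end in `S`. -/
def cutEdges (G : SimpleGraph V) (S : Set V) : Set (Sym2 V) :=
  {e | e ∈ G.edgeSet ∧ ∃ a b, e = s(a, b) ∧ a ∈ S ∧ b ∉ S}

/-- A tight cut: every perfect matching contains exactly one edge of ∂(S). -/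
def IsTightCut (G : SimpleGraph V) (S : Set V) : Prop :=
  ∀ M : G.Subgraph, M.IsPerfectMatching → ∃! e, e ∈ M.edgeSet ∧ e ∈ cutEdges G S

/-- A nontrivial cut: both shores have at least two vertices. -/
def IsNontrivialCut (S : Set V) : Prop := 2 ≤ S.ncard ∧ 2 ≤ Sᶜ.ncard

/-- The graph obtained from `G` by contracting the vertex set `S` to the
single new vertex `none`. -/
def contractSet (G : SimpleGraph V) (S : Set V) : SimpleGraph (Option {v : V // v ∉ S}) :=
  SimpleGraph.fromRel (fun a b =>
    (∃ u w : {v : V // v ∉ S}, a = some u ∧ b = some w ∧ G.Adj ↑u ↑w) ∨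
    (a = none ∧ ∃ w : {v : V // v ∉ S}, b = some w ∧ ∃ z ∈ S, G.Adj z ↑w))

/-!
An odd conformal bicycle of `G/S` lifts to one of `G`. For an edge `zw` of the tight cut with
`z ∈ S`, a perfect matching of `G` through `zw` has no other edge in `∂(S)`, so it restricts to
perfect matchings of `S - z` and of `S + w`. If the contracted vertex lies on neither cycle, the
bicycle's matching pairs it with some `w`: replace that edge by a perfect matching of `S + w`.
If it lies on a cycle, entered from `w₁` and left towards `w₂`, choose neighbours `z₁, z₂ ∈ S`
of `w₁, w₂`. The symmetric difference of perfect matchings of `S - z₁` and `S - z₂` contains an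
even `z₂z₁`-path `Q` with `S - V(Q)` perfectly matchable, and routing the cycle through `Q`
keeps it odd.
-/

namespace SimpleGraph

variable {W : Type*} {G : SimpleGraph V}

namespace Subgraph

lemma IsMatching.induce_of_forall_adj_mem {M : G.Subgraph} (hM : M.IsMatching) {U : Set V}
    (hU : U ⊆ M.verts) (hcl : ∀ x ∈ U, ∀ y, M.Adj x y → y ∈ U) : (M.induce U).IsMatching := by
  intro x hx
  obtain ⟨y, hxy, hy⟩ := hM (hU hx)
  exact ⟨y, ⟨hx, hcl x hx y hxy, hxy⟩, fun y' h ↦ hy y' h.2.2⟩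

lemma IsMatching.induce_diff_pair {M : G.Subgraph} (hM : M.IsMatching) {u v : V}
    (huv : M.Adj u v) : (M.induce (M.verts \ {u, v})).IsMatching := by
  refine hM.induce_of_forall_adj_mem Set.sdiff_subset ?_
  rintro x ⟨-, hx⟩ y hxy
  refine ⟨M.edge_vert hxy.symm, ?_⟩
  rintro (rfl | rfl)
  · exact hx (Or.inr (hM.eq_of_adj_left huv hxy.symm).symm)
  · exact hx (Or.inl (hM.eq_of_adj_right hxy huv))

lemma IsMatching.comap_of_verts_subset_range {G' : SimpleGraph W} {M : G'.Subgraph}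
    (hM : M.IsMatching) (f : G ↪g G') (hf : M.verts ⊆ Set.range f) :
    (M.comap f.toHom).IsMatching := by
  intro x hx
  obtain ⟨y', hxy, hy⟩ := hM hx
  obtain ⟨y, rfl⟩ := hf (M.edge_vert hxy.symm)
  exact ⟨y, ⟨f.map_adj_iff.1 (M.adj_sub hxy), hxy⟩, fun z hz ↦ f.injective (hy _ hz.2)⟩

end Subgraph

namespace Walk

lemma IsCycle.exists_eq_cons_concat {u : V} {c : G.Walk u u} (hc : c.IsCycle) :
    ∃ (x y : V) (h₁ : G.Adj u x) (p : G.Walk x y) (h₂ : G.Adj y u),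
      c = cons h₁ (p.concat h₂) ∧ p.IsPath ∧ u ∉ p.support := by
  cases c with
  | nil => exact absurd hc (by simp)
  | cons h₁ q =>
    cases q with
    | nil => exact absurd rfl h₁.ne
    | cons h q =>
      obtain ⟨y, p, h₂, hq⟩ := exists_cons_eq_concat h q
      rw [hq, cons_isCycle_iff, isPath_def, support_concat, List.nodup_append] at hc
      refine ⟨_, y, h₁, p, h₂, by rw [hq], isPath_def _ |>.2 hc.1.1, fun hu ↦ ?_⟩
      exact hc.1.2.2 u hu u (List.mem_singleton_self u) rfl

lemma IsCycle.exists_isPath_of_mem_support {a u : V} {c : G.Walk a a} (hc : c.IsCycle)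
    (hu : u ∈ c.support) :
    ∃ (x y : V) (_ : G.Adj u x) (p : G.Walk x y) (_ : G.Adj y u), p.IsPath ∧ u ∉ p.support ∧
      c.length = p.length + 2 ∧ ∀ v, v ∈ c.support ↔ v = u ∨ v ∈ p.support := by
  classical
  obtain ⟨x, y, h₁, p, h₂, hcp, hp, hup⟩ := (hc.rotate hu).exists_eq_cons_concat
  refine ⟨x, y, h₁, p, h₂, hp, hup, ?_, fun v ↦ ?_⟩
  · rw [← c.length_rotate u hu, hcp, length_cons, length_concat]
  · rw [← c.mem_support_rotate_iff u hu, hcp, support_cons, support_concat, List.mem_cons,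
      List.mem_append, List.mem_singleton]
    tauto

lemma isCycle_cons_append_cons {u v w x : V} (h₁ : G.Adj u v) (p : G.Walk v w) (h₂ : G.Adj w x)
    (q : G.Walk x u) (hp : p.IsPath) (hq : q.IsPath) (hpq : ∀ y ∈ p.support, y ∉ q.support)
    (hlen : 1 ≤ p.length) : (cons h₁ (p.append (cons h₂ q))).IsCycle := by
  rw [isCycle_iff_isPath_tail_and_le_length]
  simp only [getVert_cons_succ, tail_cons, isPath_copy, length_cons, length_append]
  refine ⟨?_, by omega⟩
  rw [isPath_def, support_append, support_cons, List.tail_cons, List.nodup_append]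
  exact ⟨hp.support_nodup, hq.support_nodup, fun a ha b hb hab ↦ hpq a ha (hab ▸ hb)⟩

lemma mem_support_cons_append_cons {u v w x y : V} (h₁ : G.Adj u v) (p : G.Walk v w)
    (h₂ : G.Adj w x) (q : G.Walk x u) :
    y ∈ (cons h₁ (p.append (cons h₂ q))).support ↔ y ∈ p.support ∨ y ∈ q.support := by
  simp only [support_cons, support_append, List.tail_cons, List.mem_cons, List.mem_append]
  exact ⟨by rintro (rfl | h); exacts [Or.inr q.end_mem_support, h], Or.inr⟩

end Walk

theorem exists_even_isPath_of_isMatching {U : Set V} (hU : U.Finite) {x y : V} (hx : x ∈ U)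
    (hy : y ∈ U) {A B : G.Subgraph} (hA : A.IsMatching) (hAv : A.verts = U \ {x})
    (hB : B.IsMatching) (hBv : B.verts = U \ {y}) :
    ∃ p : G.Walk x y, p.IsPath ∧ Even p.length ∧ (∀ v ∈ p.support, v ∈ U) ∧
      ∃ M : G.Subgraph, M.IsMatching ∧ M.verts = U \ {v | v ∈ p.support} := by
  obtain ⟨n, hn⟩ : ∃ n, U.ncard = n := ⟨_, rfl⟩
  induction n using Nat.strong_induction_on generalizing U x A B with
  | _ n ih =>
    by_cases hxy : x = y
    · subst hxy
      exact ⟨.nil, .nil, Even.zero, by simpa using hx, A, hA, by simpa using hAv⟩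
    -- The path alternates between `B` and `A`: take its first two edges and recurse.
    obtain ⟨x₁, hxx₁, -⟩ := hB (hBv ▸ ⟨hx, hxy⟩ : x ∈ B.verts)
    have hx₁ : x₁ ∈ U \ {y} := hBv ▸ B.edge_vert hxx₁.symm
    obtain ⟨x₂, hx₁x₂, -⟩ := hA (hAv ▸ ⟨hx₁.1, hxx₁.ne.symm⟩ : x₁ ∈ A.verts)
    have hx₂ : x₂ ∈ U \ {x} := hAv ▸ A.edge_vert hx₁x₂.symm
    have hsub : U \ {x, x₁} ⊂ U := ⟨Set.sdiff_subset, fun h ↦ (h hx).2 (Or.inl rfl)⟩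
    have hA' : (A.induce (A.verts \ {x₁, x₂})).verts = (U \ {x, x₁}) \ {x₂} := by
      rw [Subgraph.induce_verts, hAv, Set.sdiff_sdiff, Set.sdiff_sdiff, Set.singleton_union,
        Set.insert_union, Set.singleton_union]
    have hB' : (B.induce (B.verts \ {x, x₁})).verts = (U \ {x, x₁}) \ {y} := by
      rw [Subgraph.induce_verts, hBv, Set.sdiff_sdiff_comm]
    obtain ⟨p, hp, hpeven, hpU, M, hM, hMv⟩ :=
      ih _ (hn ▸ Set.ncard_lt_ncard hsub hU) (hU.subset Set.sdiff_subset)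
        (⟨hx₂.1, by simpa [not_or] using ⟨hx₂.2, hx₁x₂.ne.symm⟩⟩ : x₂ ∈ U \ {x, x₁})
        (⟨hy, by simpa [not_or] using ⟨Ne.symm hxy, fun h ↦ hx₁.2 h.symm⟩⟩ : y ∈ U \ {x, x₁})
        (hA.induce_diff_pair hx₁x₂) hA' (hB.induce_diff_pair hxx₁) hB' rfl
    have hxp : x ∉ p.support := fun h ↦ (hpU x h).2 (Or.inl rfl)
    have hx₁p : x₁ ∉ p.support := fun h ↦ (hpU x₁ h).2 (Or.inr rfl)
    refine ⟨.cons (B.adj_sub hxx₁) (.cons (A.adj_sub hx₁x₂) p),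
      (hp.cons hx₁p).cons (by simp [hxx₁.ne, hxp]), by simpa [Nat.even_add_one] using hpeven,
      by simpa [hx, hx₁.1] using fun v hv ↦ (hpU v hv).1, M, hM, ?_⟩
    rw [hMv]
    ext
    simp only [Set.mem_sdiff, Set.mem_ofPred_eq, Walk.support_cons, List.mem_cons]
    grind

end SimpleGraph

lemma IsConformalBicycle.symm {G : SimpleGraph V} {a b : V} {c₁ : G.Walk a a}
    {c₂ : G.Walk b b} (h : IsConformalBicycle G c₁ c₂) : IsConformalBicycle G c₂ c₁ := by
  obtain ⟨hc₁, hc₂, hdisj, M, hM, hMv⟩ := h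
  exact ⟨hc₂, hc₁, fun x hx hx' ↦ hdisj x hx' hx, M, hM, hMv.trans (Set.ext fun _ ↦ and_comm)⟩

section

variable {G : SimpleGraph V} {S : Set V}

@[simp] lemma contractSet_adj_some_some {u w : {v : V // v ∉ S}} :
    (contractSet G S).Adj (some u) (some w) ↔ G.Adj u w := by
  rw [contractSet, fromRel_adj]
  constructor
  · rintro ⟨-, (⟨_, _, ⟨⟩, ⟨⟩, h⟩ | ⟨⟨⟩, -⟩) | (⟨_, _, ⟨⟩, ⟨⟩, h⟩ | ⟨⟨⟩, -⟩)⟩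
    exacts [h, h.symm]
  · exact fun h ↦ ⟨fun e ↦ h.ne (by cases e; rfl), .inl (.inl ⟨u, w, rfl, rfl, h⟩)⟩

@[simp] lemma contractSet_adj_none_some {w : {v : V // v ∉ S}} :
    (contractSet G S).Adj none (some w) ↔ ∃ z ∈ S, G.Adj z w := by
  rw [contractSet, fromRel_adj]
  constructor
  · rintro ⟨-, (⟨_, _, ⟨⟩, -⟩ | ⟨-, _, ⟨⟩, h⟩) | (⟨_, _, -, ⟨⟩, -⟩ | ⟨⟨⟩, -⟩)⟩
    exact h
  · exact fun h ↦ ⟨by simp, .inl (.inr ⟨rfl, w, rfl, h⟩)⟩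

open Classical in
variable (S) in
noncomputable def contractMap (v : V) : Option {v : V // v ∉ S} :=
  if h : v ∈ S then none else some ⟨v, h⟩

lemma contractMap_of_mem {v : V} (h : v ∈ S) : contractMap S v = none :=
  dif_pos h

@[simp] lemma contractMap_of_notMem {v : V} (h : v ∉ S) : contractMap S v = some ⟨v, h⟩ :=
  dif_neg h

@[simp] lemma contractMap_val (u : {v : V // v ∉ S}) : contractMap S u = some u :=
  contractMap_of_notMem u.2

@[simp] lemma some_eq_contractMap_iff {u : {v : V // v ∉ S}} {v : V} :
    some u = contractMap S v ↔ (u : V) = v := by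
  by_cases h : v ∈ S
  · simpa [contractMap_of_mem h] using fun e : (u : V) = v ↦ u.2 (e ▸ h)
  · simp [contractMap_of_notMem h, Subtype.ext_iff]

variable (G S) in
abbrev outerShore : SimpleGraph {v : V // v ∉ S} := G.comap Subtype.val

variable (G S) in
def contractSetEmbedding : outerShore G S ↪g contractSet G S where
  toFun := some
  inj' := Option.some_injective _
  map_rel_iff' := contractSet_adj_some_some

@[simp] lemma contractSetEmbedding_apply (u : {v : V // v ∉ S}) :
    contractSetEmbedding G S u = some u := rfl

theorem exists_map_contractSetEmbedding_eq :
    ∀ {a b : {v : V // v ∉ S}} (p : (contractSet G S).Walk (some a) (some b)), none ∉ p.support →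
      ∃ q : (outerShore G S).Walk a b, q.map (contractSetEmbedding G S).toHom = p
  | _, _, .nil, _ => ⟨.nil, rfl⟩
  | _, _, .cons (v := none) _ p, hp => absurd (by simp) hp
  | _, _, .cons (v := some _) h p, hp =>
    have ⟨q, hq⟩ := exists_map_contractSetEmbedding_eq p (by simp_all)
    ⟨.cons (contractSet_adj_some_some.1 h) q, by subst hq; rfl⟩

lemma mem_support_map_val_iff {a b : {v : V // v ∉ S}} (q : (outerShore G S).Walk a b)
    (v : V) : v ∈ (q.map (Hom.comap Subtype.val G)).support ↔
      contractMap S v ∈ (q.map (contractSetEmbedding G S).toHom).support := by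
  simp [Walk.support_map, contractSetEmbedding]

lemma SimpleGraph.Walk.IsCycle.exists_lift_of_none_notMem {x : Option {v : V // v ∉ S}}
    {c : (contractSet G S).Walk x x} (hc : c.IsCycle) (h : none ∉ c.support) :
    ∃ (a : V) (C : G.Walk a a), C.IsCycle ∧ C.length = c.length ∧
      ∀ v, v ∈ C.support ↔ contractMap S v ∈ c.support := by
  obtain ⟨a, rfl⟩ := Option.ne_none_iff_exists'.1 fun e ↦ h (e ▸ c.start_mem_support)
  obtain ⟨q, rfl⟩ := exists_map_contractSetEmbedding_eq c h
  exact ⟨a, q.map (Hom.comap Subtype.val G), hc.of_map.map Subtype.val_injective,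
    (Walk.length_map _ _).trans (Walk.length_map _ _).symm, mem_support_map_val_iff q⟩

lemma SimpleGraph.Walk.IsPath.exists_lift_of_none_notMem {a b : {v : V // v ∉ S}}
    {p : (contractSet G S).Walk (some a) (some b)} (hp : p.IsPath) (h : none ∉ p.support) :
    ∃ P : G.Walk a b, P.IsPath ∧ P.length = p.length ∧
      ∀ v, v ∈ P.support ↔ contractMap S v ∈ p.support := by
  obtain ⟨q, rfl⟩ := exists_map_contractSetEmbedding_eq p h
  exact ⟨q.map (Hom.comap Subtype.val G), hp.of_map.map Subtype.val_injective,
    (Walk.length_map _ _).trans (Walk.length_map _ _).symm, mem_support_map_val_iff q⟩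

lemma SimpleGraph.Subgraph.IsMatching.exists_lift_of_none_notMem
    {M : (contractSet G S).Subgraph} (hM : M.IsMatching) (h : none ∉ M.verts) :
    ∃ L : G.Subgraph, L.IsMatching ∧ ∀ v, v ∈ L.verts ↔ contractMap S v ∈ M.verts := by
  refine ⟨(M.comap (contractSetEmbedding G S).toHom).map (Hom.comap Subtype.val G),
    (hM.comap_of_verts_subset_range _ ?_).map _ Subtype.val_injective, fun v ↦ ?_⟩
  · intro x hx
    obtain ⟨u, rfl⟩ := Option.ne_none_iff_exists.1 fun e ↦ h (e ▸ hx)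
    exact ⟨u, rfl⟩
  · by_cases hv : v ∈ S
    · simp [hv, contractMap_of_mem hv, h]
    · simp [hv]

lemma IsTightCut.eq_of_adj (ht : IsTightCut G S) {N : G.Subgraph} (hN : N.IsPerfectMatching)
    {z w x y : V} (hz : z ∈ S) (hw : w ∉ S) (hzw : N.Adj z w) (hx : x ∈ S) (hy : y ∉ S)
    (hxy : N.Adj x y) : x = z ∧ y = w := by
  obtain ⟨e, -, he⟩ := ht N hN
  have h := (he _ ⟨hxy, N.adj_sub hxy, x, y, rfl, hx, hy⟩).trans
    (he _ ⟨hzw, N.adj_sub hzw, z, w, rfl, hz, hw⟩).symm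
  rcases Sym2.eq_iff.1 h with h | ⟨rfl, -⟩
  · exact h
  · exact absurd hx hw

lemma IsTightCut.exists_isMatching_verts_eq_diff [Fintype V] (ht : IsTightCut G S)
    (hmc : MatchingCovered G) {z w : V} (hz : z ∈ S) (hw : w ∉ S) (hzw : G.Adj z w) :
    ∃ A : G.Subgraph, A.IsMatching ∧ A.verts = S \ {z} := by
  obtain ⟨N, hN, hzwN⟩ := hmc.2.2 s(z, w) hzw
  rw [Subgraph.mem_edgeSet] at hzwN
  refine ⟨N.induce (S \ {z}), hN.1.induce_of_forall_adj_mem (fun x _ ↦ hN.2 x) ?_, rfl⟩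
  rintro x ⟨hx, hxz⟩ y hxy
  by_cases hy : y ∈ S
  · refine ⟨hy, ?_⟩
    rintro rfl
    exact hw (hN.1.eq_of_adj_left hzwN hxy.symm ▸ hx)
  · exact absurd (ht.eq_of_adj hN hz hw hzwN hx hy hxy).1 hxz

lemma IsTightCut.exists_isMatching_verts_eq_insert [Fintype V] (ht : IsTightCut G S)
    (hmc : MatchingCovered G) {z w : V} (hz : z ∈ S) (hw : w ∉ S) (hzw : G.Adj z w) :
    ∃ A : G.Subgraph, A.IsMatching ∧ A.verts = insert w S := by
  obtain ⟨N, hN, hzwN⟩ := hmc.2.2 s(z, w) hzw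
  rw [Subgraph.mem_edgeSet] at hzwN
  refine ⟨N.induce (insert w S), hN.1.induce_of_forall_adj_mem (fun x _ ↦ hN.2 x) ?_, rfl⟩
  rintro x (rfl | hx) y hxy
  · exact Or.inr (hN.1.eq_of_adj_left hxy hzwN.symm ▸ hz)
  · by_cases hy : y ∈ S
    · exact Or.inr hy
    · exact Or.inl (ht.eq_of_adj hN hz hw hzwN hx hy hxy).2

lemma IsTightCut.exists_even_isPath [Fintype V] (ht : IsTightCut G S) (hmc : MatchingCovered G)
    {z₁ z₂ w₁ w₂ : V} (hz₁ : z₁ ∈ S) (hz₂ : z₂ ∈ S) (hw₁ : w₁ ∉ S) (hw₂ : w₂ ∉ S)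
    (hzw₁ : G.Adj z₁ w₁) (hzw₂ : G.Adj z₂ w₂) :
    ∃ Q : G.Walk z₁ z₂, Q.IsPath ∧ Even Q.length ∧ (∀ v ∈ Q.support, v ∈ S) ∧
      ∃ X : G.Subgraph, X.IsMatching ∧ X.verts = S \ {v | v ∈ Q.support} := by
  obtain ⟨A, hA, hAv⟩ := ht.exists_isMatching_verts_eq_diff hmc hz₁ hw₁ hzw₁
  obtain ⟨B, hB, hBv⟩ := ht.exists_isMatching_verts_eq_diff hmc hz₂ hw₂ hzw₂
  exact exists_even_isPath_of_isMatching S.toFinite hz₁ hz₂ hA hAv hB hBv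

lemma IsTightCut.hasOddConformalBicycle_of_none_notMem [Fintype V] (ht : IsTightCut G S)
    (hmc : MatchingCovered G) {a b : Option {v : V // v ∉ S}}
    {c₁ : (contractSet G S).Walk a a} {c₂ : (contractSet G S).Walk b b}
    (hb : IsConformalBicycle (contractSet G S) c₁ c₂) (ho₁ : Odd c₁.length) (ho₂ : Odd c₂.length)
    (h₁ : none ∉ c₁.support) (h₂ : none ∉ c₂.support) : HasOddConformalBicycle G := by
  obtain ⟨hc₁, hc₂, hdisj, M, hM, hMv⟩ := hb
  obtain ⟨x₁, C₁, hC₁, hlen₁, hsup₁⟩ := hc₁.exists_lift_of_none_notMem h₁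
  obtain ⟨x₂, C₂, hC₂, hlen₂, hsup₂⟩ := hc₂.exists_lift_of_none_notMem h₂
  obtain ⟨y, hy, -⟩ := hM (hMv ▸ ⟨h₁, h₂⟩ : none ∈ M.verts)
  obtain ⟨w, rfl⟩ := Option.ne_none_iff_exists'.1 (M.adj_sub hy).ne'
  obtain ⟨z, hz, hzw⟩ := contractSet_adj_none_some.1 (M.adj_sub hy)
  obtain ⟨X, hX, hXv⟩ := ht.exists_isMatching_verts_eq_insert hmc hz w.2 hzw
  obtain ⟨L, hL, hLv⟩ := (hM.induce_diff_pair hy).exists_lift_of_none_notMem (by simp)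
  have hXL : Disjoint X.support L.support := by
    rw [hX.support_eq_verts, hL.support_eq_verts, hXv, Set.disjoint_left]
    rintro v (rfl | hv) hvL
    · simp [hLv] at hvL
    · simp [hLv, contractMap_of_mem hv] at hvL
  refine ⟨x₁, x₂, C₁, C₂, ⟨hC₁, hC₂, fun v h h' ↦ hdisj _ ((hsup₁ v).1 h) ((hsup₂ v).1 h'),
    X ⊔ L, hX.sup hL hXL, ?_⟩, hlen₁ ▸ ho₁, hlen₂ ▸ ho₂⟩
  ext v
  by_cases hv : v ∈ S
  · simp [hXv, hLv, hsup₁, hsup₂, hv, contractMap_of_mem hv, h₁, h₂]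
  · have hw : some w ∉ c₁.support ∧ some w ∉ c₂.support := by
      simpa [hMv] using M.edge_vert hy.symm
    lift v to {v : V // v ∉ S} using hv
    rcases eq_or_ne v w with rfl | hvw
    · simpa [hXv, hLv, hsup₁, hsup₂, hMv] using hw
    · simp [hXv, hLv, hsup₁, hsup₂, hMv, hvw, Subtype.val_injective.ne hvw, v.2]

lemma IsTightCut.exists_isCycle_lift_of_none_mem [Fintype V] (ht : IsTightCut G S)
    (hmc : MatchingCovered G) {x : Option {v : V // v ∉ S}} {c : (contractSet G S).Walk x x}
    (hc : c.IsCycle) (h : none ∈ c.support) :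
    ∃ (z : V) (C : G.Walk z z), C.IsCycle ∧ Even (C.length + c.length) ∧
      (∀ v ∉ S, v ∈ C.support ↔ contractMap S v ∈ c.support) ∧
      ∃ X : G.Subgraph, X.IsMatching ∧ X.verts = S \ {v | v ∈ C.support} := by
  obtain ⟨_, _, h₁, p, h₂, hp, hnp, hlen, hsup⟩ := hc.exists_isPath_of_mem_support h
  obtain ⟨w₁, rfl⟩ := Option.ne_none_iff_exists'.1 fun e ↦ hnp (e ▸ p.start_mem_support)
  obtain ⟨w₂, rfl⟩ := Option.ne_none_iff_exists'.1 fun e ↦ hnp (e ▸ p.end_mem_support)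
  obtain ⟨P, hP, hPlen, hPsup⟩ := hp.exists_lift_of_none_notMem hnp
  obtain ⟨z₁, hz₁, hzw₁⟩ := contractSet_adj_none_some.1 h₁
  obtain ⟨z₂, hz₂, hzw₂⟩ := contractSet_adj_none_some.1 h₂.symm
  obtain ⟨Q, hQ, ⟨k, hk⟩, hQS, X, hX, hXv⟩ :=
    ht.exists_even_isPath hmc hz₂ hz₁ w₂.2 w₁.2 hzw₂ hzw₁
  have hPS : ∀ v ∈ P.support, v ∉ S := fun v hv hvS ↦
    hnp (contractMap_of_mem hvS ▸ (hPsup v).1 hv)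
  refine ⟨z₁, .cons hzw₁ (P.append (.cons hzw₂.symm Q)), Walk.isCycle_cons_append_cons _ _ _ _
    hP hQ (fun v hv hvQ ↦ hPS v hv (hQS v hvQ)) (by have := hc.three_le_length; omega),
    ⟨p.length + k + 2, ?_⟩, fun v hv ↦ ?_, X, hX, ?_⟩
  · simp only [Walk.length_cons, Walk.length_append, hlen, hPlen]
    omega
  · have hvQ : v ∉ Q.support := fun h ↦ hv (hQS v h)
    rw [Walk.mem_support_cons_append_cons, hsup, hPsup]
    simp [hv, hvQ]
  · ext v
    simp only [hXv, Set.mem_sdiff, Set.mem_ofPred_eq, Walk.mem_support_cons_append_cons, not_or]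
    exact ⟨fun ⟨hv, hvQ⟩ ↦ ⟨hv, fun h ↦ hPS v h hv, hvQ⟩, fun ⟨hv, _, hvQ⟩ ↦ ⟨hv, hvQ⟩⟩

lemma IsTightCut.hasOddConformalBicycle_of_none_mem [Fintype V] (ht : IsTightCut G S)
    (hmc : MatchingCovered G) {a b : Option {v : V // v ∉ S}}
    {c₁ : (contractSet G S).Walk a a} {c₂ : (contractSet G S).Walk b b}
    (hb : IsConformalBicycle (contractSet G S) c₁ c₂) (ho₁ : Odd c₁.length) (ho₂ : Odd c₂.length)
    (h₁ : none ∈ c₁.support) : HasOddConformalBicycle G := by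
  obtain ⟨hc₁, hc₂, hdisj, M, hM, hMv⟩ := hb
  obtain ⟨x₁, C₁, hC₁, hlen₁, hsup₁, X, hX, hXv⟩ := ht.exists_isCycle_lift_of_none_mem hmc hc₁ h₁
  obtain ⟨x₂, C₂, hC₂, hlen₂, hsup₂⟩ := hc₂.exists_lift_of_none_notMem (hdisj _ h₁)
  obtain ⟨L, hL, hLv⟩ := hM.exists_lift_of_none_notMem (by simp [hMv, h₁])
  have hC₂S : ∀ v ∈ C₂.support, v ∉ S := fun v hv hvS ↦
    hdisj _ h₁ (contractMap_of_mem hvS ▸ (hsup₂ v).1 hv)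
  have hXL : Disjoint X.support L.support := by
    rw [hX.support_eq_verts, hL.support_eq_verts, hXv, Set.disjoint_left]
    rintro v ⟨hv, -⟩ hvL
    simp [hLv, contractMap_of_mem hv, hMv, h₁] at hvL
  refine ⟨x₁, x₂, C₁, C₂, ⟨hC₁, hC₂, fun v h h' ↦ ?_, X ⊔ L, hX.sup hL hXL, ?_⟩, ?_, hlen₂ ▸ ho₂⟩
  · exact hdisj _ ((hsup₁ v (hC₂S v h')).1 h) ((hsup₂ v).1 h')
  · ext v
    by_cases hv : v ∈ S
    · have hvC₂ : v ∉ C₂.support := fun h ↦ hC₂S v h hv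
      simp [hXv, hLv, hMv, hv, contractMap_of_mem hv, h₁, hvC₂]
    · simp [hXv, hLv, hMv, hv, hsup₁ v hv, hsup₂]
  · rw [← Nat.not_even_iff_odd] at ho₁ ⊢
    rwa [Nat.even_add.1 hlen₁]

end

theorem contract_tight_cut_no_odd_conformal_bicycle_general [Fintype V]
    (G : SimpleGraph V) (S : Set V)
    (hmc : MatchingCovered G) (ht : IsTightCut G S)
    (h : ¬ HasOddConformalBicycle G) :
    ¬ HasOddConformalBicycle (contractSet G S) := by
  rintro ⟨a, b, c₁, c₂, hb, ho₁, ho₂⟩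
  refine h ?_
  by_cases h₁ : none ∈ c₁.support
  · exact ht.hasOddConformalBicycle_of_none_mem hmc hb ho₁ ho₂ h₁
  by_cases h₂ : none ∈ c₂.support
  · exact ht.hasOddConformalBicycle_of_none_mem hmc hb.symm ho₂ ho₁ h₂
  exact ht.hasOddConformalBicycle_of_none_notMem hmc hb ho₁ ho₂ h₁ h₂

/-- Contracting a shore of a nontrivial tight cut preserves the absence of
odd conformal bicycles. -/
theorem contract_tight_cut_no_odd_conformal_bicycle [Fintype V]
    (G : SimpleGraph V) (S : Set V)
    (hmc : MatchingCovered G) (hnt : IsNontrivialCut S) (ht : IsTightCut G S)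
    (h : ¬ HasOddConformalBicycle G) :
    ¬ HasOddConformalBicycle (contractSet G S) :=
  contract_tight_cut_no_odd_conformal_bicycle_general G S hmc ht h
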